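/- arXiv:1402.0369 — 6 statements merged into one kernel-verified Lean document; each statement's English description precedes it below -/
import Mathlib

section
/- For every integer k ≥ 0, as n → ∞ one has n · ∫₀^{1/(n+1)} (ln(n·t/(1−t)))^k · t(1−t) dt = (−1)^k · k!/2^{k+1} · (1/n) + O(1/n²); that is, the difference between n² · ∫₀^{1/(n+1)} (ln(n·t/(1−t)))^k · t(1−t) dt and (−1)^k · k!/2^{k+1} is bounded by C/n for some constant C and all n ≥ 1. -/
/-!
The substitution `t = u / (n + u)` maps `[0, 1]` onto `[0, 1/(n+1)]` and turns
`n t / (1 - t)` into `u`, so that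
`n² ∫₀^{1/(n+1)} (ln (n t/(1-t)))^k t(1-t) dt = ∫₀¹ (ln u)^k u (n/(n+u))⁴ du`.
By Bernoulli, `0 ≤ 1 - (n/(n+u))⁴ ≤ 4/n` on `[0, 1]`, so this is `∫₀¹ (ln u)^k u du + O(1/n)`;
integrating by parts against `u²/2` gives
`∫₀¹ (ln u)^(k+1) u du = -(k+1)/2 · ∫₀¹ (ln u)^k u du`, whence the value `(-1)^k k!/2^(k+1)`.
-/

open MeasureTheory Real Set Filter Topology
open scoped Interval Nat

theorem tendsto_log_pow_mul_nhdsGT_zero (k : ℕ) :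
    Tendsto (fun u : ℝ => log u ^ k * u) (𝓝[>] 0) (𝓝 0) := by
  rcases k.eq_zero_or_pos with rfl | hk
  · simp only [pow_zero, one_mul]
    exact tendsto_nhdsWithin_of_tendsto_nhds tendsto_id
  · have h := (tendsto_log_mul_rpow_nhdsGT_zero (r := 1 / k) (by positivity)).pow k
    rw [zero_pow hk.ne'] at h
    refine h.congr' ?_
    filter_upwards [self_mem_nhdsWithin] with u (hu : 0 < u)
    rw [mul_pow, ← rpow_natCast (u ^ _), ← rpow_mul hu.le, one_div_mul_cancel (by positivity),
      rpow_one]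

theorem continuous_log_pow_mul (k : ℕ) : Continuous fun u : ℝ => log u ^ k * u := by
  refine continuous_iff_continuousAt.2 fun u => ?_
  rcases ne_or_eq u 0 with hu | rfl
  · exact ((continuousAt_log hu).pow k).mul continuousAt_id
  · rw [← continuousWithinAt_compl_self, ContinuousWithinAt, mul_zero,
      tendsto_zero_iff_norm_tendsto_zero]
    simpa [Function.comp_def] using
      ((tendsto_log_pow_mul_nhdsGT_zero k).comp tendsto_abs_nhdsNE_zero).norm

theorem integral_log_pow_mul (k : ℕ) :
    ∫ u in (0 : ℝ)..1, log u ^ k * u = (-1) ^ k * k ! / 2 ^ (k + 1) := by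
  induction k with
  | zero => norm_num [integral_id]
  | succ k ih =>
    have hint (j : ℕ) : IntervalIntegrable (fun u : ℝ => log u ^ j * u) volume 0 1 :=
      (continuous_log_pow_mul j).intervalIntegrable 0 1
    have hderiv : ∀ u ∈ Ioo (0 : ℝ) 1, HasDerivAt (fun u => log u ^ (k + 1) * u * (u / 2))
        (log u ^ (k + 1) * u + (k + 1) / 2 * (log u ^ k * u)) u := by
      intro u hu
      refine ((((hasDerivAt_log hu.1.ne').fun_pow (k + 1)).fun_mul (hasDerivAt_id' u)).fun_mul
        ((hasDerivAt_id' u).div_const 2)).congr_deriv ?_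
      field_simp [hu.1.ne']
      push_cast
      ring
    have hparts :
        ∫ u in (0 : ℝ)..1, (log u ^ (k + 1) * u + (k + 1) / 2 * (log u ^ k * u)) = 0 := by
      rw [intervalIntegral.integral_eq_sub_of_hasDerivAt_of_le zero_le_one
        ((continuous_log_pow_mul (k + 1)).mul (continuous_id.div_const 2)).continuousOn hderiv
        ((hint _).add ((hint k).const_mul _))]
      simp
    rw [intervalIntegral.integral_add (hint _) ((hint k).const_mul _),
      intervalIntegral.integral_const_mul, ih] at hparts
    rw [eq_neg_of_add_eq_zero_left hparts, Nat.factorial_succ]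
    push_cast
    field_simp
    ring

theorem integral_comp_div_add_mul_deriv (g : ℝ → ℝ) {N b : ℝ} (hN : 0 < N) (hb : 0 ≤ b) :
    ∫ u in (0 : ℝ)..b, g (u / (N + u)) * (N / (N + u) ^ 2)
      = ∫ t in (0 : ℝ)..b / (N + b), g t := by
  have hderiv : ∀ u ∈ [[0, b]], HasDerivAt (fun u => u / (N + u)) (N / (N + u) ^ 2) u := by
    intro u hu
    have hu : 0 ≤ u := by simpa [hb] using hu.1
    refine ((hasDerivAt_id' u).fun_div ((hasDerivAt_id' u).const_add N)
      (by linarith)).congr_deriv ?_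
    ring
  simpa using intervalIntegral.integral_comp_mul_deriv_of_deriv_nonneg (g := g)
    (HasDerivAt.continuousOn hderiv) (fun u hu => hderiv u (Ioo_subset_Icc_self hu))
    (fun u _ => by positivity)

theorem abs_div_add_pow_sub_one_le {N u : ℝ} (hN : 0 < N) (hu : 0 ≤ u) (m : ℕ) :
    |(N / (N + u)) ^ m - 1| ≤ m * u / N := by
  set x := N / (N + u) with hx
  have hx0 : 0 ≤ x := by positivity
  have hx1 : x ≤ 1 := div_le_one_of_le₀ (by linarith) (by positivity)
  have hbernoulli : 1 + m * (x - 1) ≤ x ^ m := by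
    simpa using one_add_mul_le_pow (a := x - 1) (by linarith) m
  have h1x : 1 - x ≤ u / N := by
    rw [hx, one_sub_div (by positivity), add_sub_cancel_left]
    exact div_le_div_of_nonneg_left hu hN (by linarith)
  rw [abs_sub_comm, abs_of_nonneg (sub_nonneg.2 (pow_le_one₀ hx0 hx1)), mul_div_assoc]
  calc 1 - x ^ m ≤ m * (1 - x) := by linarith
    _ ≤ m * (u / N) := by gcongr

theorem abs_integral_mul_div_add_pow_sub_le {f : ℝ → ℝ} {N b : ℝ}
    (hf : IntervalIntegrable f volume 0 b) (hN : 0 < N) (hb : 0 ≤ b) (m : ℕ) :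
    |(∫ u in (0 : ℝ)..b, f u * (N / (N + u)) ^ m) - ∫ u in (0 : ℝ)..b, f u|
      ≤ m * b / N * ∫ u in (0 : ℝ)..b, |f u| := by
  have hw : ContinuousOn (fun u => (N / (N + u)) ^ m) [[0, b]] := by
    refine ContinuousOn.pow (continuousOn_const.div (continuousOn_const.add continuousOn_id)
      fun u hu => ?_) m
    have hu : 0 ≤ u := by simpa [hb] using hu.1
    exact (by linarith : 0 < N + u).ne'
  rw [← intervalIntegral.integral_sub (hf.mul_continuousOn hw) hf,
    ← intervalIntegral.integral_const_mul]
  refine (intervalIntegral.abs_integral_le_integral_abs hb).trans <|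
    intervalIntegral.integral_mono_on hb ((hf.mul_continuousOn hw).sub hf).abs
      (hf.abs.const_mul _) fun u hu => ?_
  rw [← mul_sub_one, abs_mul, mul_comm]
  refine mul_le_mul_of_nonneg_right ((abs_div_add_pow_sub_one_le hN hu.1 m).trans ?_)
    (abs_nonneg _)
  gcongr
  exact hu.2

/-- For every integer `k ≥ 0`, as `n → ∞`,
`n · ∫₀^{1/(n+1)} (ln(n·t/(1−t)))^k · t(1−t) dt = (−1)^k · k!/2^(k+1) · (1/n) + O(1/n²)`,
i.e. the difference between `n² · ∫₀^{1/(n+1)} (ln(n·t/(1−t)))^k · t(1−t) dt` and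
`(−1)^k · k!/2^(k+1)` is bounded by `C/n` for some constant `C` and all `n ≥ 1`. -/
theorem integral_log_pow_asymptotics (k : ℕ) :
    ∃ C : ℝ, ∀ n : ℕ, 1 ≤ n →
      |(n : ℝ) ^ 2 * (∫ t in (0:ℝ)..(1 / ((n : ℝ) + 1)),
            (Real.log ((n : ℝ) * t / (1 - t))) ^ k * (t * (1 - t)))
          - (-1 : ℝ) ^ k * (Nat.factorial k) / 2 ^ (k + 1)| ≤ C / n := by
  refine ⟨4 * ∫ u in (0 : ℝ)..1, |log u ^ k * u|, fun n hn => ?_⟩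
  have hN : (0 : ℝ) < n := by exact_mod_cast hn
  have hsubst : (n : ℝ) ^ 2 * (∫ t in (0 : ℝ)..(1 / ((n : ℝ) + 1)),
      log (n * t / (1 - t)) ^ k * (t * (1 - t)))
        = ∫ u in (0 : ℝ)..1, log u ^ k * u * (n / (n + u)) ^ 4 := by
    rw [← integral_comp_div_add_mul_deriv _ hN zero_le_one,
      ← intervalIntegral.integral_const_mul]
    refine intervalIntegral.integral_congr fun u hu => ?_
    have hu : 0 ≤ u := by simpa using hu.1
    have hnu : (n : ℝ) + u ≠ 0 := by positivity
    rw [one_sub_div hnu, add_sub_cancel_right]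
    field_simp
  rw [hsubst, ← integral_log_pow_mul k]
  refine (abs_integral_mul_div_add_pow_sub_le
    ((continuous_log_pow_mul k).intervalIntegrable 0 1) hN zero_le_one 4).trans_eq ?_
  push_cast
  ring
end

section
/- For every real z with 0 < |z| < 1, (4/(3z³)) · [4z² + (z³ − 3z)·ln((1+z)/(1−z)) − 2·ln((1+z)(1−z))] = 8 · Σ_{k=0}^{∞} z^{2k+1}/((2k+1)(2k+3)(k+2)), and the series on the right converges absolutely. -/
open Real

/-
Partial fractions split the summand into `z^(2k+1)/(2k+1)`, `z^(2k+1)/(2k+3)` and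
`z^(2k+1)/(k+2)`, each a (shifted and rescaled) tail of a logarithmic series:
`Σ z^(2k+1)/(2k+1) = ½ log((1+z)/(1-z))` and `Σ w^(n+1)/(n+1) = -log(1-w)` at `w = z²`.
Summing the three closed forms gives the left-hand side; absolute convergence is automatic
for a convergent real series.
-/

lemma HasSum.of_mul_eq_succ {K : Type*} [Field K] [TopologicalSpace K] [IsTopologicalRing K]
    {a f : ℕ → K} {s c : K} (ha : HasSum a s) (hc : c ≠ 0) (hf : ∀ k, c * f k = a (k + 1)) :
    HasSum f ((s - a 0) / c) := by
  have htail : HasSum (fun k => a (k + 1)) (s - a 0) := by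
    simpa using (hasSum_nat_add_iff' 1).2 ha
  rw [← funext hf, ← mul_div_cancel₀ (s - a 0) hc] at htail
  exact (hasSum_mul_left_iff hc).1 htail

lemma div_mul_mul_eq_partial_fractions {x k : ℝ}
    (h₁ : 2 * k + 1 ≠ 0) (h₂ : 2 * k + 3 ≠ 0) (h₃ : k + 2 ≠ 0) :
    x / ((2 * k + 1) * (2 * k + 3) * (k + 2)) =
      x / (2 * k + 1) / 3 - x / (2 * k + 3) + x / (k + 2) / 3 := by
  field_simp
  ring

section Series

variable {z : ℝ}

lemma hasSum_pow_odd_div_odd (hz : |z| < 1) :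
    HasSum (fun k : ℕ => z ^ (2 * k + 1) / (2 * k + 1)) (log ((1 + z) / (1 - z)) / 2) := by
  obtain ⟨hz₁, hz₂⟩ := abs_lt.1 hz
  rw [log_div (by linarith) (by linarith)]
  exact ((hasSum_log_sub_log_of_abs_lt_one hz).div_const 2).congr_fun fun k => by ring

lemma hasSum_pow_odd_div_odd_add_two (hz0 : z ≠ 0) (hz : |z| < 1) :
    HasSum (fun k : ℕ => z ^ (2 * k + 1) / (2 * k + 3))
      ((log ((1 + z) / (1 - z)) / 2 - z) / z ^ 2) := by
  have h := (hasSum_pow_odd_div_odd hz).of_mul_eq_succ (pow_ne_zero 2 hz0)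
    (f := fun k : ℕ => z ^ (2 * k + 1) / (2 * k + 3)) fun k => by
      push_cast
      field_simp
      ring
  simpa using h

lemma hasSum_pow_odd_div_add_two (hz0 : z ≠ 0) (hz : |z| < 1) :
    HasSum (fun k : ℕ => z ^ (2 * k + 1) / (k + 2)) ((-log (1 - z ^ 2) - z ^ 2) / z ^ 3) := by
  have hz2 : |z ^ 2| < 1 := by simpa [abs_pow] using pow_lt_one₀ (abs_nonneg z) hz two_ne_zero
  have h := (hasSum_pow_div_log_of_abs_lt_one hz2).of_mul_eq_succ (pow_ne_zero 3 hz0)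
    (f := fun k : ℕ => z ^ (2 * k + 1) / (k + 2)) fun k => by
      push_cast
      field_simp
      ring
  simpa using h

lemma hasSum_pow_odd_div_cubic (hz0 : z ≠ 0) (hz : |z| < 1) :
    HasSum (fun k : ℕ => z ^ (2 * k + 1) / ((2 * (k : ℝ) + 1) * (2 * k + 3) * (k + 2)))
      (log ((1 + z) / (1 - z)) / 2 / 3 - (log ((1 + z) / (1 - z)) / 2 - z) / z ^ 2
        + (-log (1 - z ^ 2) - z ^ 2) / z ^ 3 / 3) := by
  refine ((((hasSum_pow_odd_div_odd hz).div_const 3).sub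
    (hasSum_pow_odd_div_odd_add_two hz0 hz)).add
    ((hasSum_pow_odd_div_add_two hz0 hz).div_const 3)).congr_fun fun k => ?_
  exact div_mul_mul_eq_partial_fractions (by positivity) (by positivity) (by positivity)

end Series

/-- For `0 < |z| < 1`,
`(4/(3z³)) · [4z² + (z³ − 3z)·ln((1+z)/(1−z)) − 2·ln((1+z)(1−z))]`
equals `8 · Σ_{k=0}^{∞} z^{2k+1}/((2k+1)(2k+3)(k+2))`, the series converging absolutely. -/
theorem generating_function_series (z : ℝ) (hz0 : 0 < |z|) (hz1 : |z| < 1) :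
    Summable (fun k : ℕ =>
      |z ^ (2 * k + 1) / ((2 * (k : ℝ) + 1) * (2 * (k : ℝ) + 3) * ((k : ℝ) + 2))|) ∧
    (4 / (3 * z ^ 3)) *
        (4 * z ^ 2 + (z ^ 3 - 3 * z) * Real.log ((1 + z) / (1 - z))
          - 2 * Real.log ((1 + z) * (1 - z)))
      = 8 * ∑' k : ℕ,
          z ^ (2 * k + 1) / ((2 * (k : ℝ) + 1) * (2 * (k : ℝ) + 3) * ((k : ℝ) + 2)) := by
  have hz : z ≠ 0 := abs_pos.1 hz0
  have hsum := hasSum_pow_odd_div_cubic hz hz1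
  refine ⟨hsum.summable.abs, ?_⟩
  rw [hsum.tsum_eq, show (1 + z) * (1 - z) = 1 - z ^ 2 by ring]
  field_simp
  ring
end

section
/- For every real z with 0 < z < 1, setting R = R(x,z) = √(1 − 2zx + z²) (the positive square root, which satisfies R > 0 for all x ∈ [−1,1]), one has ∫_{−1}^{1} [4(1−x²)/(R·(1−z+R)·(1+z+R))] · ln((1+x)/(1−x)) dx = (4/(3z³)) · [4z² + (z³ − 3z)·ln((1+z)/(1−z)) − 2·ln((1+z)(1−z))]. -/
/-!
Substitute `s = R(x)`: then `2z(1 - x) = s² - (1 - z)²` and `2z(1 + x) = (1 + z)² - s²`, so the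
weight `4(1 - x²)/(R(1 - z + R)(1 + z + R))` equals `(s - (1 - z))(1 + z - s)/(z² s)` and has the
primitive `G = (s³ - 3s² + 3(1 - z²)s)/(3z³)`. Integrate by parts against
`log(1 + x) - log(1 - x)`, using the primitives `G - G(-1)` and `G(1) - G`, which vanish where the
respective logarithm blows up. What is left is the integral of
`(G(1) - G(x))/(1 - x) - (G(x) - G(-1))/(1 + x)`; both quotients are rational in `s`, so it is
elementary, with logarithms of `s + 1 - z` and `s + 1 + z`.
-/

open MeasureTheory Real Set Filter Topology intervalIntegral

theorem HasDerivAt.tendsto_sub_mul_log_sub {f : ℝ → ℝ} {f' a : ℝ} (hf : HasDerivAt f f' a) :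
    Tendsto (fun x => (f x - f a) * Real.log (x - a)) (𝓝[≠] a) (𝓝 0) := by
  have hlog : Tendsto (fun x => (x - a) * Real.log (x - a)) (𝓝[≠] a) (𝓝 0) := by
    have := (continuous_mul_log.comp (continuous_sub_right a)).tendsto a
    simpa only [Function.comp_def, sub_self, zero_mul] using this.mono_left nhdsWithin_le_nhds
  have := (hasDerivAt_iff_tendsto_slope.mp hf).mul hlog
  rw [mul_zero] at this
  refine this.congr fun x => ?_
  rw [← vsub_eq_sub (f x), ← sub_smul_slope f a x, smul_eq_mul]
  ring

theorem intervalIntegrable_log_one_add_div_one_sub :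
    IntervalIntegrable (fun x => log ((1 + x) / (1 - x))) volume (-1) 1 := by
  have h₁ : IntervalIntegrable (fun x => log (1 + x)) volume (-1) 1 := by
    simpa [show (2 : ℝ) - 1 = 1 by norm_num] using
      intervalIntegrable_log'.comp_add_left (a := 0) (b := 2) 1
  have h₂ : IntervalIntegrable (fun x => log (1 - x)) volume (-1) 1 := by
    simpa [show (1 : ℝ) - 2 = -1 by norm_num] using
      intervalIntegrable_log'.comp_sub_left (a := 2) (b := 0) 1
  refine (h₁.sub h₂).congr_uIoo fun _ hx => ?_
  rw [uIoo_of_le (by norm_num)] at hx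
  rw [log_div (by linarith [hx.1]) (by linarith [hx.2])]

theorem integral_mul_log_one_add_div_one_sub {G g C : ℝ → ℝ}
    (hG : ∀ x ∈ Icc (-1 : ℝ) 1, HasDerivAt G (g x) x) (hg : ContinuousOn g (Icc (-1) 1))
    (hC : ∀ x ∈ Ioo (-1 : ℝ) 1,
      HasDerivAt C ((G 1 - G x) / (1 - x) - (G x - G (-1)) / (1 + x)) x)
    (hC_cont : ContinuousOn C (Icc (-1) 1)) :
    ∫ x in (-1 : ℝ)..1, g x * log ((1 + x) / (1 - x)) = C 1 - C (-1) := by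
  have hG_neg_one := hG (-1) (by norm_num)
  have hG_one := hG 1 (by norm_num)
  let H x := (G x - G (-1)) * log (1 + x) + (G 1 - G x) * log (1 - x) + C x
  have hH : ∀ x ∈ Ioo (-1 : ℝ) 1, HasDerivAt H (g x * log ((1 + x) / (1 - x))) x := by
    rintro x ⟨hx₁, hx₂⟩
    have hplus : 1 + x ≠ 0 := by linarith
    have hminus : 1 - x ≠ 0 := by linarith
    have hGx := hG x ⟨hx₁.le, hx₂.le⟩
    have := (((hGx.sub_const (G (-1))).mul (((hasDerivAt_id x).const_add 1).log hplus)).add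
      (((hGx.const_sub (G 1))).mul (((hasDerivAt_id x).const_sub 1).log hminus))).add
      (hC x ⟨hx₁, hx₂⟩)
    refine (this : HasDerivAt H _ x).congr_deriv ?_
    rw [log_div hplus hminus, id]
    field_simp
    ring
  have hleft : Tendsto H (𝓝[>] (-1)) (𝓝 ((G 1 - G (-1)) * log 2 + C (-1))) := by
    have h₁ : Tendsto (fun x => (G x - G (-1)) * log (1 + x)) (𝓝[>] (-1)) (𝓝 0) := by
      simpa only [sub_neg_eq_add, add_comm] using
        hG_neg_one.tendsto_sub_mul_log_sub.mono_left (nhdsGT_le_nhdsNE _)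
    have h₂ : Tendsto (fun x => (G 1 - G x) * log (1 - x)) (𝓝[>] (-1))
        (𝓝 ((G 1 - G (-1)) * log 2)) := by
      have : ContinuousAt (fun x => (G 1 - G x) * log (1 - x)) (-1) :=
        (continuousAt_const.sub hG_neg_one.continuousAt).mul
          ((continuousAt_const.sub continuousAt_id).log (by norm_num))
      simpa [show (1:ℝ) - -1 = 2 by norm_num] using this.tendsto.mono_left nhdsWithin_le_nhds
    have h₃ : Tendsto C (𝓝[>] (-1)) (𝓝 (C (-1))) :=
      (hC_cont (-1) (by norm_num)).mono_of_mem_nhdsWithin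
        (mem_of_superset (Ico_mem_nhdsGT (by norm_num)) Ico_subset_Icc_self)
    simpa using (h₁.add h₂).add h₃
  have hright : Tendsto H (𝓝[<] 1) (𝓝 ((G 1 - G (-1)) * log 2 + C 1)) := by
    have h₁ : Tendsto (fun x => (G x - G (-1)) * log (1 + x)) (𝓝[<] 1)
        (𝓝 ((G 1 - G (-1)) * log 2)) := by
      have : ContinuousAt (fun x => (G x - G (-1)) * log (1 + x)) 1 :=
        (hG_one.continuousAt.sub continuousAt_const).mul
          ((continuousAt_const.add continuousAt_id).log (by norm_num))
      simpa [one_add_one_eq_two] using this.tendsto.mono_left nhdsWithin_le_nhds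
    have h₂ : Tendsto (fun x => (G 1 - G x) * log (1 - x)) (𝓝[<] 1) (𝓝 0) := by
      have := (hG_one.tendsto_sub_mul_log_sub.mono_left (nhdsLT_le_nhdsNE _)).neg
      rw [neg_zero] at this
      refine this.congr fun x => ?_
      rw [← log_neg_eq_log (x - 1), neg_sub]
      ring
    have h₃ : Tendsto C (𝓝[<] 1) (𝓝 (C 1)) :=
      (hC_cont 1 (by norm_num)).mono_of_mem_nhdsWithin
        (mem_of_superset (Ioc_mem_nhdsLT (by norm_num)) Ioc_subset_Icc_self)
    simpa using (h₁.add h₂).add h₃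
  have hint : IntervalIntegrable (fun x => g x * log ((1 + x) / (1 - x))) volume (-1) 1 :=
    intervalIntegrable_log_one_add_div_one_sub.continuousOn_mul
      (by rwa [uIcc_of_le (by norm_num)])
  rw [integral_eq_sub_of_hasDerivAt_of_tendsto (by norm_num) hH hint hleft hright]
  ring

namespace GeneratingFunctionIntegral

variable {z x : ℝ}

noncomputable def R (z x : ℝ) : ℝ := √(1 - 2 * z * x + z ^ 2)

theorem one_sub_le_R (hz : 0 ≤ z) (hx : x ≤ 1) : 1 - z ≤ R z x :=
  (le_abs_self _).trans (abs_le_sqrt (by nlinarith))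

theorem R_pos (hz0 : 0 ≤ z) (hz1 : z < 1) (hx : x ≤ 1) : 0 < R z x := by
  linarith [one_sub_le_R hz0 hx]

theorem R_sq (hz : 0 ≤ z) (hx : x ≤ 1) : R z x ^ 2 = 1 - 2 * z * x + z ^ 2 :=
  sq_sqrt (by nlinarith [sq_nonneg (1 - z), mul_nonneg hz (sub_nonneg.2 hx)])

theorem R_one (hz : z ≤ 1) : R z 1 = 1 - z := by
  rw [R, show 1 - 2 * z * 1 + z ^ 2 = (1 - z) ^ 2 by ring, sqrt_sq (by linarith)]

theorem R_neg_one (hz : -1 ≤ z) : R z (-1) = 1 + z := by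
  rw [R, show 1 - 2 * z * (-1) + z ^ 2 = (1 + z) ^ 2 by ring, sqrt_sq (by linarith)]

theorem continuous_R (z : ℝ) : Continuous (R z) := by
  unfold R; fun_prop

theorem hasDerivAt_R (hz0 : 0 ≤ z) (hz1 : z < 1) (hx : x ≤ 1) :
    HasDerivAt (R z) (-z / R z x) x := by
  have hpos := R_pos hz0 hz1 hx
  have hrad : 1 - 2 * z * x + z ^ 2 ≠ 0 := by rw [← R_sq hz0 hx]; positivity
  have := (hasDerivAt_sqrt hrad).comp x
    ((((hasDerivAt_id x).const_mul (2 * z)).const_sub 1).add_const (z ^ 2))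
  refine this.congr_deriv ?_
  rw [← R]
  field_simp

theorem eq_one_add_sq_sub_R_sq_div (hz : 0 < z) (hx : x ≤ 1) :
    x = (1 + z ^ 2 - R z x ^ 2) / (2 * z) := by
  rw [R_sq hz.le hx]; field_simp; ring

noncomputable def weight (z x : ℝ) : ℝ :=
  4 * (1 - x ^ 2) / (R z x * (1 - z + R z x) * (1 + z + R z x))

theorem weight_eq (hz0 : 0 < z) (hz1 : z < 1) (hx : x ≤ 1) :
    weight z x = (R z x - (1 - z)) * (1 + z - R z x) / (z ^ 2 * R z x) := by
  rw [weight]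
  have hx' := eq_one_add_sq_sub_R_sq_div hz0 hx
  have hpos := R_pos hz0.le hz1 hx
  have ha : 0 < 1 - z + R z x := by linarith
  generalize R z x = s at *
  subst hx'
  field_simp
  ring

noncomputable def weightAntideriv (z x : ℝ) : ℝ :=
  (R z x ^ 3 - 3 * R z x ^ 2 + 3 * (1 - z ^ 2) * R z x) / (3 * z ^ 3)

theorem hasDerivAt_weightAntideriv (hz0 : 0 < z) (hz1 : z < 1) (hx : x ≤ 1) :
    HasDerivAt (weightAntideriv z) (weight z x) x := by
  have hR := hasDerivAt_R hz0.le hz1 hx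
  have := (((hR.pow 3).sub ((hR.pow 2).const_mul 3)).add
    (hR.const_mul (3 * (1 - z ^ 2)))).div_const (3 * z ^ 3)
  refine (this : HasDerivAt (weightAntideriv z) _ x).congr_deriv ?_
  rw [weight_eq hz0 hz1 hx]
  have hpos := R_pos hz0.le hz1 hx
  field_simp
  ring

theorem weightAntideriv_one_sub (hz0 : 0 < z) (hz1 : z < 1) (hx : x ≤ 1) :
    weightAntideriv z 1 - weightAntideriv z x
      = (1 - x) *
          (2 * (R z x - (1 - z)) * (1 + 2 * z - R z x) / (3 * z ^ 2 * (R z x + 1 - z))) := by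
  have hx' := eq_one_add_sq_sub_R_sq_div hz0 hx
  have hpos := R_pos hz0.le hz1 hx
  have ha : 0 < R z x + 1 - z := by linarith
  rw [weightAntideriv, weightAntideriv, R_one hz1.le]
  generalize R z x = s at *
  subst hx'
  field_simp
  ring

theorem weightAntideriv_sub_neg_one (hz0 : 0 < z) (hz1 : z < 1) (hx : x ≤ 1) :
    weightAntideriv z x - weightAntideriv z (-1)
      = (1 + x) *
          (2 * (1 + z - R z x) * (R z x - 1 + 2 * z) / (3 * z ^ 2 * (1 + z + R z x))) := by
  have hx' := eq_one_add_sq_sub_R_sq_div hz0 hx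
  have hpos := R_pos hz0.le hz1 hx
  have hb : 0 < 1 + z + R z x := by linarith
  rw [weightAntideriv, weightAntideriv, R_neg_one (by linarith)]
  generalize R z x = s at *
  subst hx'
  field_simp
  ring

noncomputable def slopeAntideriv (z x : ℝ) : ℝ :=
  2 / (3 * z ^ 3) * (-4 * z * R z x - 2 * (1 - z) ^ 2 * (z + 2) * log ((R z x + 1 - z) / 2)
    + 2 * (1 + z) ^ 2 * (2 - z) * log ((1 + z + R z x) / 2))

theorem hasDerivAt_slopeAntideriv (hz0 : 0 < z) (hz1 : z < 1) (hx : x ∈ Ioo (-1 : ℝ) 1) :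
    HasDerivAt (slopeAntideriv z)
      ((weightAntideriv z 1 - weightAntideriv z x) / (1 - x)
        - (weightAntideriv z x - weightAntideriv z (-1)) / (1 + x)) x := by
  obtain ⟨hx₁, hx₂⟩ := hx
  rw [weightAntideriv_one_sub hz0 hz1 hx₂.le, weightAntideriv_sub_neg_one hz0 hz1 hx₂.le,
    mul_div_cancel_left₀ _ (by linarith), mul_div_cancel_left₀ _ (by linarith)]
  have hpos := R_pos hz0.le hz1 hx₂.le
  have ha : 0 < R z x + 1 - z := by linarith
  have hb : 0 < 1 + z + R z x := by linarith
  have hR := hasDerivAt_R hz0.le hz1 hx₂.le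
  have hlog_a := (((hR.add_const 1).sub_const z).div_const 2).log (by positivity)
  have hlog_b := ((hR.const_add (1 + z)).div_const 2).log (by positivity)
  have := (((hR.const_mul (-4 * z)).sub (hlog_a.const_mul (2 * (1 - z) ^ 2 * (z + 2)))).add
    (hlog_b.const_mul (2 * (1 + z) ^ 2 * (2 - z)))).const_mul (2 / (3 * z ^ 3))
  refine (this : HasDerivAt (slopeAntideriv z) _ x).congr_deriv ?_
  field_simp
  ring

theorem continuousOn_weight (hz0 : 0 < z) (hz1 : z < 1) :
    ContinuousOn (weight z) (Icc (-1) 1) := by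
  intro x hx
  have hpos := R_pos hz0.le hz1 hx.2
  have hR := continuous_R z
  have hden : R z x * (1 - z + R z x) * (1 + z + R z x) ≠ 0 := by
    have : 0 < 1 - z + R z x := by linarith
    positivity
  unfold weight
  fun_prop (disch := exact hden)

theorem continuousOn_slopeAntideriv (hz0 : 0 < z) (hz1 : z < 1) :
    ContinuousOn (slopeAntideriv z) (Icc (-1) 1) := by
  intro x hx
  have hpos := R_pos hz0.le hz1 hx.2
  have hR := continuous_R z
  have ha : (R z x + 1 - z) / 2 ≠ 0 := by
    have : 0 < R z x + 1 - z := by linarith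
    positivity
  have hb : (1 + z + R z x) / 2 ≠ 0 := by
    have : 0 < 1 + z + R z x := by linarith
    positivity
  unfold slopeAntideriv
  fun_prop (disch := assumption)

theorem slopeAntideriv_one_sub_neg_one (hz0 : 0 < z) (hz1 : z < 1) :
    slopeAntideriv z 1 - slopeAntideriv z (-1)
      = (4 / (3 * z ^ 3)) * (4 * z ^ 2 + (z ^ 3 - 3 * z) * log ((1 + z) / (1 - z))
          - 2 * log ((1 + z) * (1 - z))) := by
  have ha : 1 - z ≠ 0 := by linarith
  have hb : 1 + z ≠ 0 := by linarith
  rw [slopeAntideriv, slopeAntideriv, R_one hz1.le, R_neg_one (by linarith),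
    show (1 - z + 1 - z) / 2 = 1 - z by ring, show (1 + z + (1 - z)) / 2 = 1 by ring,
    show (1 + z + 1 - z) / 2 = 1 by ring, show (1 + z + (1 + z)) / 2 = 1 + z by ring,
    log_one, log_div hb ha, log_mul hb ha]
  field_simp
  ring

end GeneratingFunctionIntegral

open GeneratingFunctionIntegral

/-- For `0 < z < 1`, with `R = √(1 − 2zx + z²)`,
`∫_{−1}^{1} [4(1−x²)/(R(1−z+R)(1+z+R))] · ln((1+x)/(1−x)) dx
  = (4/(3z³)) · [4z² + (z³ − 3z)·ln((1+z)/(1−z)) − 2·ln((1+z)(1−z))]`. -/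
theorem generating_function_integral (z : ℝ) (hz0 : 0 < z) (hz1 : z < 1) :
    ∫ x in (-1:ℝ)..1,
        (4 * (1 - x ^ 2) /
            (Real.sqrt (1 - 2 * z * x + z ^ 2) *
              (1 - z + Real.sqrt (1 - 2 * z * x + z ^ 2)) *
              (1 + z + Real.sqrt (1 - 2 * z * x + z ^ 2)))) *
          Real.log ((1 + x) / (1 - x))
      = (4 / (3 * z ^ 3)) *
          (4 * z ^ 2 + (z ^ 3 - 3 * z) * Real.log ((1 + z) / (1 - z))
            - 2 * Real.log ((1 + z) * (1 - z))) :=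
  (integral_mul_log_one_add_div_one_sub
    (fun _ hx => hasDerivAt_weightAntideriv hz0 hz1 hx.2) (continuousOn_weight hz0 hz1)
    (fun _ hx => hasDerivAt_slopeAntideriv hz0 hz1 hx) (continuousOn_slopeAntideriv hz0 hz1)).trans
    (slopeAntideriv_one_sub_neg_one hz0 hz1)
end

section
/- For every real x with −1 < x < 1, |(1−x²)·ln((1+x)/(1−x))| < 1. -/
open Real

private lemma two_log_lt_aux (t : ℝ) (ht : 1 < t) : 2 * Real.log t < t - 1/t := by
  have key : StrictMonoOn (fun t : ℝ => t - 1/t - 2 * Real.log t) (Set.Ici 1) := by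
    apply strictMonoOn_of_deriv_pos (convex_Ici 1)
    · apply ContinuousOn.sub
      · apply ContinuousOn.sub continuousOn_id
        exact continuousOn_const.div continuousOn_id (fun y hy => by
          simp only [Set.mem_Ici] at hy; intro h; simp [h] at hy; linarith)
      · exact ContinuousOn.mul continuousOn_const
          (Real.continuousOn_log.mono (fun y hy => by
            simp only [Set.mem_Ici] at hy; simp; intro h; rw [h] at hy; linarith))
    · intro y hy
      rw [interior_Ici] at hy
      simp only [Set.mem_Ioi] at hy
      have hy0 : (0:ℝ) < y := by linarith
      have hd : HasDerivAt (fun t : ℝ => t - 1/t - 2 * Real.log t)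
          (1 - (-(1/y^2)) - 2 * (1/y)) y := by
        have h1 : HasDerivAt (fun t : ℝ => t) 1 y := hasDerivAt_id y
        have h2 : HasDerivAt (fun t : ℝ => 1/t) (-(1/y^2)) y := by
          simpa using (hasDerivAt_inv hy0.ne')
        have h3 : HasDerivAt (fun t : ℝ => 2 * Real.log t) (2 * (1/y)) y := by
          simpa using (Real.hasDerivAt_log hy0.ne').const_mul 2
        exact (h1.sub h2).sub h3
      rw [hd.deriv]
      have : 1 - (-(1/y^2)) - 2 * (1/y) = (1 - 1/y)^2 := by
        field_simp; ring
      rw [this]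
      have h4 : 0 < 1 - 1/y := by
        have : 1/y < 1 := by rw [div_lt_one hy0]; exact hy
        linarith
      exact pow_pos h4 2
  have h0 : (fun t : ℝ => t - 1/t - 2 * Real.log t) 1 < (fun t : ℝ => t - 1/t - 2 * Real.log t) t :=
    key (Set.self_mem_Ici) (Set.mem_Ici.mpr ht.le) ht
  simp only [Real.log_one] at h0
  norm_num [one_div] at h0 ⊢
  linarith

private lemma key_lemma (x : ℝ) (h0 : 0 ≤ x) (h1 : x < 1) :
    0 ≤ (1 - x ^ 2) * Real.log ((1 + x) / (1 - x)) ∧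
    (1 - x ^ 2) * Real.log ((1 + x) / (1 - x)) < 1 := by
  have h1x : (0:ℝ) < 1 - x := by linarith
  have h1x' : (0:ℝ) < 1 + x := by linarith
  have hsq : (0:ℝ) < 1 - x^2 := by nlinarith
  have hy1 : 1 ≤ (1 + x) / (1 - x) := (one_le_div h1x).mpr (by linarith)
  have hlognn : 0 ≤ Real.log ((1 + x) / (1 - x)) := Real.log_nonneg hy1
  refine ⟨mul_nonneg hsq.le hlognn, ?_⟩
  rcases eq_or_lt_of_le h0 with rfl | hx
  · norm_num
  set s := Real.sqrt (1 - x^2) with hs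
  have hs2 : s^2 = 1 - x^2 := Real.sq_sqrt hsq.le
  have hspos : 0 < s := Real.sqrt_pos.mpr hsq
  set t := s / (1 - x) with htdef
  have htpos : 0 < t := div_pos hspos h1x
  have ht2 : t^2 = (1 + x) / (1 - x) := by
    rw [htdef, div_pow, hs2]
    rw [div_eq_div_iff (pow_ne_zero 2 h1x.ne') h1x.ne']
    ring
  have ht1 : 1 < t := by
    nlinarith [sq_nonneg (t - 1), sq_nonneg (t + 1), (one_lt_div h1x).mpr (by linarith : 1 - x < 1 + x)]
  have hlog : Real.log ((1 + x) / (1 - x)) = 2 * Real.log t := by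
    rw [← ht2, Real.log_pow]; norm_num
  have hb := two_log_lt_aux t ht1
  rw [hlog]
  have hts : t - 1/t = 2 * x / s := by
    rw [htdef]
    field_simp
    nlinarith [hs2]
  calc (1 - x^2) * (2 * Real.log t) < (1 - x^2) * (t - 1/t) := by
        exact mul_lt_mul_of_pos_left hb hsq
    _ = (1 - x^2) * (2 * x / s) := by rw [hts]
    _ = 2 * x * s := by
        rw [← hs2]; field_simp
    _ ≤ 1 := by nlinarith [sq_nonneg (x - s)]

/-- For `−1 < x < 1`, `|(1−x²)·ln((1+x)/(1−x))| < 1`. -/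
theorem abs_weighted_log_lt_one (x : ℝ) (hx : -1 < x) (hx' : x < 1) :
    |(1 - x ^ 2) * Real.log ((1 + x) / (1 - x))| < 1 := by
  rcases le_or_gt 0 x with h | h
  · obtain ⟨hnn, hlt⟩ := key_lemma x h hx'
    rwa [abs_of_nonneg hnn]
  · obtain ⟨hnn, hlt⟩ := key_lemma (-x) (by linarith) (by linarith)
    have h1x : (0:ℝ) < 1 - x := by linarith
    have h1x' : (0:ℝ) < 1 + x := by linarith
    have heq : (1 - x ^ 2) * Real.log ((1 + x) / (1 - x)) =
        -((1 - (-x) ^ 2) * Real.log ((1 + -x) / (1 - -x))) := by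
      have heq2 : (1 + -x) / (1 - -x) = ((1 + x) / (1 - x))⁻¹ := by
        rw [inv_div]; ring_nf
      rw [heq2, Real.log_inv]; ring
    rw [heq, abs_neg, abs_of_nonneg hnn]
    exact hlt
end

section
/- Let X₁, X₂, … be independent identically distributed real random variables with the logistic distribution function G(x) = 1/(1+e^{−x}), and for each n let Y_{1,n} = min(X₁,…,X_n). Define M_{1,n} = n · ∫₀^{1/(n+1)} (Y_{1,n} − ln(t/(1−t)))² · 6t(1−t) dt. Then M_{1,n} → 0 in probability as n → ∞, i.e., for every ε > 0, P(|M_{1,n}| > ε) → 0. -/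
/-!
On `(0, δ]` with `δ ≤ 1/2` the integrand is at most `12 y² δ + 192 √δ`, because
`log² (t / (1 - t)) ≤ log² t` and `t log² t ≤ 16 √t`; with `δ = 1/(n+1)` this gives
`|M_{1,n}| ≤ 12 Y² / n + 192 / √n`. Both logistic tails are at most `e^{-a}`, so a union bound
over the `n` variables gives `P(|Y_{1,n}| > 2 log (n+1)) ≤ (n+1) e^{-2 log (n+1)} = 1/(n+1)`,
and off that event `|M_{1,n}| ≤ 48 log² (n+1) / n + 192 / √n → 0`.
-/

open MeasureTheory ProbabilityTheory Filter Real

lemma sq_log_mul_le_sqrt {t : ℝ} (h0 : 0 < t) (h1 : t ≤ 1) : log t ^ 2 * t ≤ 16 * √t := by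
  have hlt : |log t * t ^ (1 / 4 : ℝ)| < 4 := by
    simpa using abs_log_mul_self_rpow_lt t (1 / 4) h0 h1 (by norm_num)
  have hsq : (t ^ (1 / 4 : ℝ)) ^ 2 = √t := by
    rw [← rpow_natCast, ← rpow_mul h0.le, sqrt_eq_rpow]; norm_num
  calc log t ^ 2 * t = (log t * t ^ (1 / 4 : ℝ)) ^ 2 * √t := by
        rw [mul_pow, hsq, mul_assoc, mul_self_sqrt h0.le]
    _ ≤ 16 * √t := by
        gcongr
        nlinarith [sq_abs (log t * t ^ (1 / 4 : ℝ)), abs_nonneg (log t * t ^ (1 / 4 : ℝ))]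

lemma sq_log_div_one_sub_le {t : ℝ} (h0 : 0 < t) (h1 : t ≤ 1 / 2) :
    log (t / (1 - t)) ^ 2 ≤ log t ^ 2 := by
  have h1t : 0 < 1 - t := by linarith
  have hle : log (t / (1 - t)) ≤ 0 :=
    log_nonpos (by positivity) ((div_le_one h1t).2 (by linarith))
  have hge : log t ≤ log (t / (1 - t)) :=
    log_le_log h0 ((le_div_iff₀ h1t).2 (by nlinarith))
  nlinarith

lemma logistic_integrand_le (y : ℝ) {t δ : ℝ} (ht : 0 < t) (htδ : t ≤ δ)
    (hδ : δ ≤ 1 / 2) :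
    (y - log (t / (1 - t))) ^ 2 * (6 * t * (1 - t)) ≤ 12 * y ^ 2 * δ + 192 * √δ := by
  set q := log (t / (1 - t))
  have hq : q ^ 2 * t ≤ 16 * √δ :=
    calc q ^ 2 * t ≤ log t ^ 2 * t :=
          mul_le_mul_of_nonneg_right (sq_log_div_one_sub_le ht (htδ.trans hδ)) ht.le
      _ ≤ 16 * √t := sq_log_mul_le_sqrt ht (by linarith)
      _ ≤ 16 * √δ := by gcongr
  calc (y - q) ^ 2 * (6 * t * (1 - t)) ≤ (2 * y ^ 2 + 2 * q ^ 2) * (6 * t) :=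
        mul_le_mul (by nlinarith [sq_nonneg (y + q)]) (by nlinarith) (by nlinarith) (by positivity)
    _ = 12 * (y ^ 2 * t) + 12 * (q ^ 2 * t) := by ring
    _ ≤ 12 * (y ^ 2 * δ) + 12 * (16 * √δ) := by gcongr
    _ = 12 * y ^ 2 * δ + 192 * √δ := by ring

/-- `M_{1,n}` as a function of `y = Y_{1,n}`; `log (t / (1 - t))` is the logistic quantile
`G⁻¹(t)`. -/
noncomputable def lowerTailFunctional (n : ℕ) (y : ℝ) : ℝ :=
  n * ∫ t in (0 : ℝ)..(1 / ((n : ℝ) + 1)), (y - log (t / (1 - t))) ^ 2 * (6 * t * (1 - t))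

lemma abs_lowerTailFunctional_le (n : ℕ) (y : ℝ) :
    |lowerTailFunctional n y| ≤ 12 * y ^ 2 / n + 192 / √n := by
  rcases Nat.eq_zero_or_pos n with rfl | hn
  · simp [lowerTailFunctional]
  have hn1 : (1 : ℝ) ≤ n := by exact_mod_cast hn
  set δ : ℝ := 1 / ((n : ℝ) + 1) with hδ
  have hδ0 : 0 < δ := by positivity
  have hnδ : n * δ ≤ 1 := by rw [hδ, mul_one_div, div_le_one (by positivity)]; linarith
  have hδn : δ ≤ 1 / n := one_div_le_one_div_of_le (by positivity) (by linarith)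
  have hδ2 : δ ≤ 1 / 2 := one_div_le_one_div_of_le two_pos (by linarith)
  have hbound : ∀ t ∈ Set.uIoc 0 δ,
      ‖(y - log (t / (1 - t))) ^ 2 * (6 * t * (1 - t))‖ ≤ 12 * y ^ 2 * δ + 192 * √δ := by
    intro t ht
    rw [Set.uIoc_of_le hδ0.le] at ht
    rw [Real.norm_of_nonneg (mul_nonneg (sq_nonneg _) (by nlinarith [ht.1, ht.2]))]
    exact logistic_integrand_le y ht.1 ht.2 hδ2
  have hint := intervalIntegral.norm_integral_le_of_norm_le_const hbound
  rw [sub_zero, abs_of_pos hδ0] at hint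
  have hsqrt : √δ ≤ 1 / √n :=
    calc √δ ≤ √(1 / n) := sqrt_le_sqrt hδn
      _ = 1 / √n := by rw [one_div, sqrt_inv, one_div]
  calc |lowerTailFunctional n y| ≤ n * ((12 * y ^ 2 * δ + 192 * √δ) * δ) := by
        rw [lowerTailFunctional, abs_mul, Nat.abs_cast]; gcongr; exact hint
    _ = (n * δ) * (12 * y ^ 2 * δ + 192 * √δ) := by ring
    _ ≤ 1 * (12 * y ^ 2 * (1 / n) + 192 * (1 / √n)) := by gcongr
    _ = 12 * y ^ 2 / n + 192 / √n := by ring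

lemma abs_lowerTailFunctional_le_of_abs_le (n : ℕ) {y a : ℝ} (hy : |y| ≤ a) :
    |lowerTailFunctional n y| ≤ 12 * a ^ 2 / n + 192 / √n := by
  have : y ^ 2 ≤ a ^ 2 := sq_le_sq' (abs_le.1 hy).1 (abs_le.1 hy).2
  grw [abs_lowerTailFunctional_le, this]

section Logistic

variable {Ω : Type*} [MeasurableSpace Ω] {P : Measure Ω}

lemma measureReal_le_neg_le_exp_of_logistic {X : Ω → ℝ}
    (hX : ∀ x, P.real {ω | X ω ≤ x} = 1 / (1 + exp (-x))) (a : ℝ) :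
    P.real {ω | X ω ≤ -a} ≤ exp (-a) := by
  rw [hX, neg_neg, exp_neg, one_div]
  exact inv_anti₀ (exp_pos a) (by linarith)

lemma measureReal_lt_le_exp_of_logistic [IsProbabilityMeasure P] {X : Ω → ℝ}
    (hXm : Measurable X)
    (hX : ∀ x, P.real {ω | X ω ≤ x} = 1 / (1 + exp (-x))) (a : ℝ) :
    P.real {ω | a < X ω} ≤ exp (-a) := by
  have hcompl : {ω | a < X ω} = {ω | X ω ≤ a}ᶜ := by ext; simp
  rw [hcompl, measureReal_compl (s := {ω | X ω ≤ a}) (hXm measurableSet_Iic), probReal_univ, hX,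
    one_sub_div (by positivity), add_sub_cancel_left]
  exact div_le_self (exp_pos _).le (by linarith [exp_pos (-a)])

lemma measureReal_lt_abs_iInf_le_of_logistic [IsProbabilityMeasure P] {X : ℕ → Ω → ℝ}
    (hX₀ : Measurable (X 0)) (hX : ∀ i x, P.real {ω | X i ω ≤ x} = 1 / (1 + exp (-x)))
    {n : ℕ} (hn : 0 < n) (a : ℝ) :
    P.real {ω | a < |⨅ i : Fin n, X i ω|} ≤ (n + 1) * exp (-a) := by
  have : Nonempty (Fin n) := ⟨⟨0, hn⟩⟩
  have hsub : {ω | a < |⨅ i : Fin n, X i ω|} ⊆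
      {ω | a < X 0 ω} ∪ ⋃ i : Fin n, {ω | X i ω ≤ -a} := by
    intro ω (hω : a < |_|)
    rcases lt_abs.1 hω with h | h
    · exact Or.inl (h.trans_le (ciInf_le (Set.finite_range _).bddBelow (⟨0, hn⟩ : Fin n)))
    · obtain ⟨i, hi⟩ := exists_lt_of_ciInf_lt (lt_neg_of_lt_neg h)
      exact Or.inr (Set.mem_iUnion.2 ⟨i, hi.le⟩)
  calc P.real {ω | a < |⨅ i : Fin n, X i ω|}
      ≤ P.real {ω | a < X 0 ω} + ∑ i : Fin n, P.real {ω | X i ω ≤ -a} :=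
        (measureReal_mono hsub).trans
          ((measureReal_union_le _ _).trans (by gcongr; exact measureReal_iUnion_fintype_le _))
    _ ≤ exp (-a) + ∑ _i : Fin n, exp (-a) := by
        gcongr with i
        · exact measureReal_lt_le_exp_of_logistic hX₀ (hX 0) a
        · exact measureReal_le_neg_le_exp_of_logistic (hX i) a
    _ = (n + 1) * exp (-a) := by
        simp only [Finset.sum_const, Finset.card_univ, Fintype.card_fin, nsmul_eq_mul]; ring

end Logistic

lemma tendsto_lowerTailFunctional_bound_log :
    Tendsto (fun n : ℕ => 12 * (2 * log (n + 1)) ^ 2 / n + 192 / √n) atTop (nhds 0) := by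
  have hlog : Tendsto (fun n : ℕ => log ((n : ℝ) + 1) ^ 2 / n) atTop (nhds 0) :=
    ((tendsto_pow_log_div_mul_add_atTop 1 (-1) 2 one_ne_zero).comp
      (tendsto_atTop_add_const_right _ 1 tendsto_natCast_atTop_atTop)).congr fun n => by simp
  have hsqrt : Tendsto (fun n : ℕ => 1 / √n) atTop (nhds 0) :=
    (tendsto_inv_atTop_zero.comp (tendsto_sqrt_atTop.comp tendsto_natCast_atTop_atTop)).congr
      fun n => (one_div _).symm
  simpa using ((hlog.const_mul 48).add (hsqrt.const_mul 192)).congr fun n => by ring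

theorem logistic_min_tail_integral_to_zero_in_probability_general
    {Ω : Type*} [MeasurableSpace Ω] (P : Measure Ω) [IsProbabilityMeasure P]
    (X : ℕ → Ω → ℝ) (hmeas : ∀ i, Measurable (X i))
    (hdist : ∀ i, ∀ x : ℝ, (P {ω | X i ω ≤ x}).toReal = 1 / (1 + Real.exp (-x))) :
    ∀ ε > (0:ℝ),
      Tendsto (fun n : ℕ =>
          (P {ω | ε <
              |(n : ℝ) * ∫ t in (0:ℝ)..(1 / ((n : ℝ) + 1)),
                  ((⨅ i : Fin n, X i ω) - Real.log (t / (1 - t))) ^ 2 *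
                    (6 * t * (1 - t))|}).toReal)
        atTop (nhds 0) := by
  intro ε hε
  refine squeeze_zero' (Eventually.of_forall fun _ => ENNReal.toReal_nonneg) ?_
    tendsto_one_div_add_atTop_nhds_zero_nat
  filter_upwards [tendsto_lowerTailFunctional_bound_log.eventually (gt_mem_nhds hε),
    eventually_gt_atTop 0] with n hbound hn
  have hsub : {ω | ε < |lowerTailFunctional n (⨅ i : Fin n, X i ω)|} ⊆
      {ω | 2 * log (n + 1) < |⨅ i : Fin n, X i ω|} := fun ω (hω : ε < _) => by
    by_contra! hY
    linarith [abs_lowerTailFunctional_le_of_abs_le n (not_lt.1 hY)]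
  calc P.real {ω | ε < |lowerTailFunctional n (⨅ i : Fin n, X i ω)|}
      ≤ P.real {ω | 2 * log (n + 1) < |⨅ i : Fin n, X i ω|} := measureReal_mono hsub
    _ ≤ (n + 1) * exp (-(2 * log (n + 1))) :=
        measureReal_lt_abs_iInf_le_of_logistic (hmeas 0) hdist hn _
    _ = 1 / (n + 1) := by
        rw [exp_neg, ← log_rpow (by positivity), exp_log (by positivity), rpow_two]
        field_simp

/-- If `X₁, X₂, …` are i.i.d. with logistic distribution function `G(x) = 1/(1+e^{−x})`,
`Y_{1,n} = min(X₁,…,X_n)`, and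
`M_{1,n} = n · ∫₀^{1/(n+1)} (Y_{1,n} − ln(t/(1−t)))² · 6t(1−t) dt`,
then `M_{1,n} → 0` in probability. -/
theorem logistic_min_tail_integral_to_zero_in_probability
    {Ω : Type*} [MeasurableSpace Ω] (P : Measure Ω) [IsProbabilityMeasure P]
    (X : ℕ → Ω → ℝ) (hmeas : ∀ i, Measurable (X i))
    (hindep : iIndepFun X P)
    (hdist : ∀ i, ∀ x : ℝ, (P {ω | X i ω ≤ x}).toReal = 1 / (1 + Real.exp (-x))) :
    ∀ ε > (0:ℝ),
      Tendsto (fun n : ℕ =>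
          (P {ω | ε <
              |(n : ℝ) * ∫ t in (0:ℝ)..(1 / ((n : ℝ) + 1)),
                  ((⨅ i : Fin n, X i ω) - Real.log (t / (1 - t))) ^ 2 *
                    (6 * t * (1 - t))|}).toReal)
        atTop (nhds 0) :=
  logistic_min_tail_integral_to_zero_in_probability_general P X hmeas hdist
end

section
/- Let X₁, X₂, … be independent identically distributed real random variables with the logistic distribution function G(x) = 1/(1+e^{−x}), and for each n let Y_{n,n} = max(X₁,…,X_n). Define M_{n,n} = n · ∫_{n/(n+1)}^{1} (Y_{n,n} − ln(t/(1−t)))² · 6t(1−t) dt. Then M_{n,n} → 0 in probability as n → ∞, i.e., for every ε > 0, P(|M_{n,n}| > ε) → 0. -/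
/-!
The maximum of `n` independent standard logistic variables concentrates around `log n`
with exponential tails: `P(Y_{n,n} > log n + c) ≤ n (1 - G(log n + c)) ≤ e^{-c}` by the
union bound, and `P(Y_{n,n} < log n - c) ≤ G(log n - c)^n ≤ e^{-c}` by independence and
Bernoulli's inequality. On the other hand, on `(n/(n+1), 1)` the quantile `log(t/(1-t))`
differs from `log n` by `log(n(1-t)) - log t`, and `n (1-t) log²(n (1-t)) ≤ 4`, so
deterministically `|M_{n,n}| ≤ 18 ((Y_{n,n} - log n)² + 5) / n`. Hence `|M_{n,n}| > ε` forces
`|Y_{n,n} - log n| ≳ √(ε n)`, an event of vanishing probability.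
-/

open MeasureTheory ProbabilityTheory Filter Real

lemma Real.mul_log_sq_le_four {v : ℝ} (hv : 0 < v) (hv1 : v ≤ 1) : v * log v ^ 2 ≤ 4 := by
  have hs := abs_log_mul_self_lt (√v) (sqrt_pos.2 hv) (sqrt_le_one.2 hv1)
  calc v * log v ^ 2 = 4 * (log √v * √v) ^ 2 := by
        rw [log_sqrt hv.le, mul_pow, sq_sqrt hv.le]; ring
    _ ≤ 4 := by nlinarith [sq_abs (log √v * √v), abs_nonneg (log √v * √v)]

lemma sq_sub_log_odds_mul_le (Y : ℝ) {n : ℕ} (hn : 1 ≤ n) {t : ℝ}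
    (ht : t ∈ Set.Ioc ((n : ℝ) / (n + 1)) 1) :
    (Y - log (t / (1 - t))) ^ 2 * (6 * t * (1 - t)) ≤ 18 * ((Y - log n) ^ 2 + 5) / n := by
  obtain ⟨hat, ht_le⟩ := ht
  have hn0 : (0 : ℝ) < n := by exact_mod_cast hn
  rcases ht_le.eq_or_lt with rfl | ht_lt
  · simp only [sub_self, mul_zero]; positivity
  have hu : 0 < 1 - t := by linarith
  have hnu : n * (1 - t) < 1 := by
    rw [div_lt_iff₀ (by positivity)] at hat; linarith
  have ht_half : 1 / 2 ≤ t := by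
    rw [div_lt_iff₀ (by positivity)] at hat
    have : (1 : ℝ) ≤ n := by exact_mod_cast hn
    nlinarith
  have hlogt : log t ^ 2 ≤ 1 := by
    have := one_sub_inv_le_log_of_pos (show 0 < t by linarith)
    have := log_nonpos (show 0 ≤ t by linarith) ht_le
    have : t⁻¹ ≤ 2 := by rw [inv_le_comm₀ (by linarith) two_pos]; linarith
    nlinarith
  -- Split the logit around its typical value `log n` at the scale `1 - t ≈ 1 / n`.
  have hsplit : Y - log (t / (1 - t)) = (Y - log n) + log (n * (1 - t)) - log t := by
    rw [log_div (by linarith) hu.ne', log_mul hn0.ne' hu.ne']; ring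
  set A := Y - log n
  set v := n * (1 - t) with hv
  have hB := mul_log_sq_le_four (mul_pos hn0 hu) hnu.le
  rw [le_div_iff₀ hn0, hsplit]
  have hS : (A + log v - log t) ^ 2 ≤ 3 * (A ^ 2 + log v ^ 2 + log t ^ 2) := by
    nlinarith [sq_nonneg (A - log v), sq_nonneg (A + log t), sq_nonneg (log v + log t)]
  calc (A + log v - log t) ^ 2 * (6 * t * (1 - t)) * n
      = t * ((A + log v - log t) ^ 2 * (6 * v)) := by rw [hv]; ring
    _ ≤ (A + log v - log t) ^ 2 * (6 * v) := by
        exact mul_le_of_le_one_left (by positivity) ht_le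
    _ ≤ 3 * (A ^ 2 + log v ^ 2 + log t ^ 2) * (6 * v) := by gcongr
    _ = 18 * (v * A ^ 2 + v * log v ^ 2 + v * log t ^ 2) := by ring
    _ ≤ 18 * (A ^ 2 + 5) := by nlinarith [sq_nonneg A]

lemma abs_mul_integral_sq_sub_log_odds_le (Y : ℝ) {n : ℕ} (hn : 1 ≤ n) :
    |(n : ℝ) * ∫ t in ((n : ℝ) / ((n : ℝ) + 1))..(1:ℝ),
        (Y - log (t / (1 - t))) ^ 2 * (6 * t * (1 - t))| ≤ 18 * ((Y - log n) ^ 2 + 5) / n := by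
  have hn0 : (0 : ℝ) < n := by exact_mod_cast hn
  have hlen : |1 - (n : ℝ) / (n + 1)| = 1 / (n + 1) := by
    rw [abs_of_nonneg (by rw [sub_nonneg, div_le_one (by positivity)]; linarith)]
    field_simp; ring
  have hint := intervalIntegral.norm_integral_le_of_norm_le_const (a := (n : ℝ) / (n + 1))
    (b := 1) (C := 18 * ((Y - log n) ^ 2 + 5) / n) fun t ht => by
      rw [Set.uIoc_of_le (by rw [div_le_one (by positivity)]; linarith)] at ht
      have ht0 : 0 < t := lt_of_le_of_lt (by positivity) ht.1
      have hw : 0 ≤ 6 * t * (1 - t) := mul_nonneg (by positivity) (sub_nonneg.2 ht.2)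
      rw [norm_of_nonneg (mul_nonneg (sq_nonneg _) hw)]
      exact sq_sub_log_odds_mul_le Y hn ht
  rw [norm_eq_abs, hlen] at hint
  rw [abs_mul, abs_of_pos hn0]
  calc (n : ℝ) * |_| ≤ n * (18 * ((Y - log n) ^ 2 + 5) / n * (1 / (n + 1))) := by gcongr
    _ ≤ 18 * ((Y - log n) ^ 2 + 5) / n := by
        rw [mul_comm, mul_assoc]
        refine mul_le_of_le_one_right (by positivity) ?_
        rw [div_mul_eq_mul_div, one_mul, div_le_one (by positivity)]; linarith

section MaxOfFinitelyMany

variable {Ω ι : Type*} [MeasurableSpace Ω] {P : Measure Ω} [IsProbabilityMeasure P]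
  [Fintype ι] {X : ι → Ω → ℝ}

lemma measure_lt_iSup_le_sum [Nonempty ι] (hmeas : ∀ i, Measurable (X i)) (b : ℝ) :
    (P {ω | b < ⨆ i, X i ω}).toReal ≤ ∑ i, (1 - (P {ω | X i ω ≤ b}).toReal) := by
  have hsub : {ω | b < ⨆ i, X i ω} ⊆ ⋃ i, {ω | X i ω ≤ b}ᶜ := fun ω hω => by
    by_contra h
    simp only [Set.mem_iUnion, Set.mem_compl_iff, Set.mem_ofPred_eq, not_exists, not_not] at h
    exact (ciSup_le h).not_gt hω
  calc (P {ω | b < ⨆ i, X i ω}).toReal ≤ ∑ i, (P {ω | X i ω ≤ b}ᶜ).toReal := by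
        rw [← ENNReal.toReal_sum fun i _ => measure_ne_top P _]
        exact ENNReal.toReal_mono (ENNReal.sum_ne_top.2 fun i _ => measure_ne_top P _)
          ((measure_mono hsub).trans (measure_iUnion_fintype_le P _))
    _ = ∑ i, (1 - (P {ω | X i ω ≤ b}).toReal) := by
        refine Finset.sum_congr rfl fun i _ => ?_
        rw [prob_compl_eq_one_sub (measurableSet_le (hmeas i) measurable_const),
          ENNReal.toReal_sub_of_le prob_le_one ENNReal.one_ne_top, ENNReal.toReal_one]

lemma measure_iSup_lt_le_prod (hindep : iIndepFun X P) (b : ℝ) :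
    (P {ω | ⨆ i, X i ω < b}).toReal ≤ ∏ i, (P {ω | X i ω ≤ b}).toReal := by
  have hsub : {ω | ⨆ i, X i ω < b} ⊆ ⋂ i, {ω | X i ω ≤ b} := fun ω hω =>
    Set.mem_iInter.2 fun i =>
      ((le_ciSup (Set.finite_range fun j => X j ω).bddAbove i).trans_lt hω).le
  rw [← ENNReal.toReal_prod,
    ← hindep.meas_iInter (s := fun i => {ω | X i ω ≤ b})
      fun i => ⟨Set.Iic b, measurableSet_Iic, rfl⟩]
  exact ENNReal.toReal_mono (measure_ne_top P _) (measure_mono hsub)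

end MaxOfFinitelyMany

lemma nat_mul_logistic_tail_le {n : ℕ} (hn : 1 ≤ n) (c : ℝ) :
    n * (1 - 1 / (1 + exp (-(log n + c)))) ≤ exp (-c) := by
  have hn0 : (0 : ℝ) < n := by exact_mod_cast hn
  have hx : exp (-(log n + c)) = exp (-c) / n := by
    rw [neg_add, exp_add, exp_neg (log n), exp_log hn0]; ring
  have hx0 := exp_pos (-(log n + c))
  calc n * (1 - 1 / (1 + exp (-(log n + c))))
      = n * (exp (-(log n + c)) / (1 + exp (-(log n + c)))) := by field_simp; ring
    _ ≤ n * exp (-(log n + c)) := by gcongr; exact div_le_self hx0.le (by linarith)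
    _ = exp (-c) := by rw [hx]; field_simp

lemma logistic_cdf_pow_le {n : ℕ} (hn : 1 ≤ n) (c : ℝ) :
    (1 / (1 + exp (-(log n - c)))) ^ n ≤ exp (-c) := by
  have hn0 : (0 : ℝ) < n := by exact_mod_cast hn
  have hx : n * exp (-(log n - c)) = exp c := by
    rw [neg_sub, exp_sub, exp_log hn0]; field_simp
  have hx0 := exp_pos (-(log n - c))
  have hbern : exp c ≤ (1 + exp (-(log n - c))) ^ n := by
    linarith [one_add_mul_le_pow (show (-2 : ℝ) ≤ exp (-(log n - c)) by linarith) n]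
  rw [div_pow, one_pow, exp_neg c, ← one_div]
  exact one_div_le_one_div_of_le (exp_pos c) hbern

lemma measure_lt_abs_iSup_logistic_sub_log_le {Ω : Type*} [MeasurableSpace Ω] {P : Measure Ω}
    [IsProbabilityMeasure P] {X : ℕ → Ω → ℝ} (hmeas : ∀ i, Measurable (X i))
    (hindep : iIndepFun X P)
    (hdist : ∀ i, ∀ x : ℝ, (P {ω | X i ω ≤ x}).toReal = 1 / (1 + exp (-x)))
    {n : ℕ} (hn : 1 ≤ n) (c : ℝ) :
    (P {ω | c < |(⨆ i : Fin n, X i ω) - log n|}).toReal ≤ 2 * exp (-c) := by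
  have : Nonempty (Fin n) := ⟨⟨0, hn⟩⟩
  have hsub : {ω | c < |(⨆ i : Fin n, X i ω) - log n|} ⊆
      {ω | log n + c < ⨆ i : Fin n, X i ω} ∪ {ω | ⨆ i : Fin n, X i ω < log n - c} := by
    intro ω (hω : c < _)
    rcases lt_abs.1 hω with h | h
    · exact .inl (by simp only [Set.mem_ofPred_eq]; linarith)
    · exact .inr (by simp only [Set.mem_ofPred_eq]; linarith)
  have hupper := measure_lt_iSup_le_sum (P := P) (fun i : Fin n => hmeas i) (log n + c)
  have hlower := measure_iSup_lt_le_prod (hindep.precomp (Fin.val_injective (n := n))) (log n - c)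
  simp only [hdist, Finset.sum_const, Finset.prod_const, Finset.card_univ,
    Fintype.card_fin, nsmul_eq_mul] at hupper hlower
  calc (P {ω | c < |(⨆ i : Fin n, X i ω) - log n|}).toReal
      ≤ (P {ω | log n + c < ⨆ i : Fin n, X i ω}).toReal
        + (P {ω | ⨆ i : Fin n, X i ω < log n - c}).toReal :=
        (ENNReal.toReal_mono (measure_ne_top P _) (measure_mono hsub)).trans
          (measureReal_union_le _ _)
    _ ≤ exp (-c) + exp (-c) := by
        gcongr
        exacts [hupper.trans (nat_mul_logistic_tail_le hn c),
          hlower.trans (logistic_cdf_pow_le hn c)]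
    _ = 2 * exp (-c) := by ring

/-- If `X₁, X₂, …` are i.i.d. with logistic distribution function `G(x) = 1/(1+e^{−x})`,
`Y_{n,n} = max(X₁,…,X_n)`, and
`M_{n,n} = n · ∫_{n/(n+1)}^{1} (Y_{n,n} − ln(t/(1−t)))² · 6t(1−t) dt`,
then `M_{n,n} → 0` in probability. -/
theorem logistic_max_tail_integral_to_zero_in_probability
    {Ω : Type*} [MeasurableSpace Ω] (P : Measure Ω) [IsProbabilityMeasure P]
    (X : ℕ → Ω → ℝ) (hmeas : ∀ i, Measurable (X i))
    (hindep : iIndepFun X P)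
    (hdist : ∀ i, ∀ x : ℝ, (P {ω | X i ω ≤ x}).toReal = 1 / (1 + Real.exp (-x))) :
    ∀ ε > (0:ℝ),
      Tendsto (fun n : ℕ =>
          (P {ω | ε <
              |(n : ℝ) * ∫ t in ((n : ℝ) / ((n : ℝ) + 1))..(1:ℝ),
                  ((⨆ i : Fin n, X i ω) - Real.log (t / (1 - t))) ^ 2 *
                    (6 * t * (1 - t))|}).toReal)
        atTop (nhds 0) := by
  intro ε hε
  -- `ε < |M_{n,n}|` forces `(Y_{n,n} - log n) ^ 2 > ε n / 18 - 5`.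
  have hthreshold : Tendsto (fun n : ℕ => ε * n / 18 - 5) atTop atTop :=
    tendsto_atTop_add_const_right _ _
      ((tendsto_natCast_atTop_atTop.const_mul_atTop hε).atTop_div_const (by norm_num))
  have hbound : Tendsto (fun n : ℕ => 2 * exp (-√(ε * n / 18 - 5))) atTop (nhds 0) := by
    simpa using ((tendsto_exp_atBot.comp
      (tendsto_neg_atTop_atBot.comp (tendsto_sqrt_atTop.comp hthreshold))).const_mul 2)
  refine squeeze_zero' (.of_forall fun n => ENNReal.toReal_nonneg) ?_ hbound
  filter_upwards [eventually_ge_atTop 1, hthreshold.eventually_ge_atTop 0] with n hn hpos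
  refine (ENNReal.toReal_mono (measure_ne_top P _) (measure_mono fun ω hω => ?_)).trans
    (measure_lt_abs_iSup_logistic_sub_log_le hmeas hindep hdist hn _)
  have hM := (lt_div_iff₀ (by exact_mod_cast hn : (0 : ℝ) < n)).1
    ((Set.mem_ofPred_eq ▸ hω).trans_le (abs_mul_integral_sq_sub_log_odds_le _ hn))
  rw [Set.mem_ofPred_eq, ← sqrt_sq_eq_abs]
  exact sqrt_lt_sqrt hpos (by linarith)
end
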